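/- Let n be a positive integer and define c_{n,s} = Γ((n+s+1)/2) / (π^{n/2} 2^{-s} Γ((1-s)/2)) for -1 ≤ s < 1, and c_{n,1} = 0. Then c_{n,·} is bounded on [-1,1], the function s ↦ c_{n,s}/(1-s) is bounded on [-1,1), and lim_{s→1⁻} c_{n,s}/(1-s) = 1/ω_n, where ω_n is the volume of the unit ball in ℝⁿ. -/
import Mathlib


open MeasureTheory Filter Real Set
open scoped ENNReal Topology

noncomputable section

/-- The normalizing constant `c_{n,s}` (in the form used in Lemma 2.5 of the paper),
extended by `0` at `s = 1`. -/
def cBound (n : ℕ) (s : ℝ) : ℝ :=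
  if s = 1 then 0
  else Real.Gamma (((n : ℝ) + s + 1) / 2) /
    (Real.pi ^ ((n : ℝ) / 2) * (2 : ℝ) ^ (-s) * Real.Gamma ((1 - s) / 2))

/-- The volume of the unit ball in `ℝⁿ`. -/
def unitBallVol (n : ℕ) : ℝ :=
  (volume (Metric.ball (0 : EuclideanSpace ℝ (Fin n)) 1)).toReal

/-- auxiliary: continuity of Gamma at positive points -/
lemma myGammaContAt {x : ℝ} (hx : 0 < x) : ContinuousAt Real.Gamma x :=
  (Real.differentiableAt_Gamma
    (fun m => ((lt_of_le_of_lt (neg_nonpos.2 (Nat.cast_nonneg m)) hx)).ne')).continuousAt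

/-- auxiliary smooth version of `cBound n s / (1 - s)` -/
def gAux (n : ℕ) (s : ℝ) : ℝ :=
  Real.Gamma (((n : ℝ) + s + 1) / 2) /
    (Real.pi ^ ((n : ℝ) / 2) * (2 : ℝ) ^ (-s) * (2 * Real.Gamma ((3 - s) / 2)))

lemma gAux_eq (n : ℕ) {s : ℝ} (hs : s < 1) :
    cBound n s / (1 - s) = gAux n s := by
  have h1 : (0:ℝ) < (1 - s) / 2 := by linarith
  have hG : Real.Gamma ((3 - s) / 2) = (1 - s) / 2 * Real.Gamma ((1 - s) / 2) := by
    have := Real.Gamma_add_one h1.ne'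
    rw [show (1 - s) / 2 + 1 = (3 - s) / 2 by ring] at this
    exact this
  have hGpos := Real.Gamma_pos_of_pos h1
  have hpi : (0:ℝ) < Real.pi ^ ((n : ℝ) / 2) := Real.rpow_pos_of_pos Real.pi_pos _
  have h2 : (0:ℝ) < (2:ℝ) ^ (-s) := Real.rpow_pos_of_pos (by norm_num) _
  rw [cBound, if_neg hs.ne, gAux, hG]
  field_simp

lemma gAux_continuousAt (n : ℕ) (hn : 0 < n) {s : ℝ} (hs : s ∈ Set.Icc (-1 : ℝ) 1) :
    ContinuousAt (gAux n) s := by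
  obtain ⟨hs1, hs2⟩ := hs
  have hn1 : (1:ℝ) ≤ n := by exact_mod_cast hn
  have harg1 : (0:ℝ) < ((n : ℝ) + s + 1) / 2 := by linarith
  have harg2 : (0:ℝ) < (3 - s) / 2 := by linarith
  have hc1 : ContinuousAt (fun s : ℝ => Real.Gamma (((n : ℝ) + s + 1) / 2)) s :=
    ContinuousAt.comp (g := Real.Gamma) (f := fun s : ℝ => (((n : ℝ) + s + 1) / 2))
      (myGammaContAt harg1) (by fun_prop)
  have hc2 : ContinuousAt (fun s : ℝ => Real.Gamma ((3 - s) / 2)) s :=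
    ContinuousAt.comp (g := Real.Gamma) (f := fun s : ℝ => ((3 - s) / 2))
      (myGammaContAt harg2) (by fun_prop)
  have hc3 : ContinuousAt (fun s : ℝ => (2:ℝ) ^ (-s)) s :=
    (Real.continuousAt_const_rpow (by norm_num : (2:ℝ) ≠ 0)).comp (by fun_prop)
  have hpi : (0:ℝ) < Real.pi ^ ((n : ℝ) / 2) := Real.rpow_pos_of_pos Real.pi_pos _
  have h2 : (0:ℝ) < (2:ℝ) ^ (-s) := Real.rpow_pos_of_pos (by norm_num) _
  have hGpos := Real.Gamma_pos_of_pos harg2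
  have hden : (Real.pi ^ ((n : ℝ) / 2) * (2:ℝ) ^ (-s) * (2 * Real.Gamma ((3 - s) / 2))) ≠ 0 := by
    positivity
  exact hc1.div ((continuousAt_const.mul hc3).mul (continuousAt_const.mul hc2)) hden

lemma gAux_continuousOn (n : ℕ) (hn : 0 < n) :
    ContinuousOn (gAux n) (Set.Icc (-1 : ℝ) 1) := fun s hs =>
  (gAux_continuousAt n hn hs).continuousWithinAt

lemma unitBallVol_eq (n : ℕ) (hn : 0 < n) :
    unitBallVol n = Real.pi ^ ((n : ℝ) / 2) / Real.Gamma ((n : ℝ) / 2 + 1) := by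
  have : Nonempty (Fin n) := Fin.pos_iff_nonempty.mp hn
  rw [unitBallVol, EuclideanSpace.volume_ball, Fintype.card_fin]
  rw [ENNReal.toReal_mul, ENNReal.toReal_pow, ENNReal.toReal_ofReal zero_le_one]
  rw [one_pow, one_mul, ENNReal.toReal_ofReal (by positivity)]
  congr 1
  rw [Real.sqrt_eq_rpow, ← Real.rpow_natCast (Real.pi ^ ((1:ℝ)/2)) n, ← Real.rpow_mul Real.pi_pos.le]
  ring_nf

/-- `c_{n,·}` is bounded on `[-1,1]`, `s ↦ c_{n,s}/(1-s)` is bounded on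
`[-1,1)`, and `c_{n,s}/(1-s) → 1/ω_n` as `s → 1⁻`, where `ω_n` is the volume of the
unit ball in `ℝⁿ`. -/
theorem bounds_and_limit_of_cns (n : ℕ) (hn : 0 < n) :
    (∃ M : ℝ, ∀ s ∈ Set.Icc (-1 : ℝ) 1, |cBound n s| ≤ M) ∧
    (∃ M : ℝ, ∀ s ∈ Set.Ico (-1 : ℝ) 1, |cBound n s / (1 - s)| ≤ M) ∧
    Tendsto (fun s : ℝ => cBound n s / (1 - s)) (𝓝[<] (1 : ℝ))
      (𝓝 (1 / unitBallVol n)) := by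
  obtain ⟨M, hM⟩ := IsCompact.exists_bound_of_continuousOn isCompact_Icc (gAux_continuousOn n hn)
  simp only [Real.norm_eq_abs] at hM
  have hM0 : 0 ≤ M := le_trans (abs_nonneg _) (hM (-1) (by constructor <;> norm_num))
  refine ⟨⟨2 * M, fun s hs => ?_⟩, ⟨M, fun s hs => ?_⟩, ?_⟩
  · rcases eq_or_lt_of_le hs.2 with h | h
    · simp [cBound, h]; linarith
    · have heq : cBound n s = gAux n s * (1 - s) :=
        (div_eq_iff (sub_ne_zero.mpr h.ne')).mp (gAux_eq n h)
      rw [heq, abs_mul]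
      have h1 : |1 - s| ≤ 2 := by
        rw [abs_le]; exact ⟨by linarith, by linarith [hs.1]⟩
      calc |gAux n s| * |1 - s| ≤ M * 2 := by
            exact mul_le_mul (hM s hs) h1 (abs_nonneg _) hM0
        _ = 2 * M := by ring
  · rw [gAux_eq n hs.2]
    exact hM s ⟨hs.1, hs.2.le⟩
  · have hlim : Tendsto (gAux n) (𝓝[<] (1:ℝ)) (𝓝 (gAux n 1)) :=
      ((gAux_continuousAt n hn (by constructor <;> norm_num)).tendsto).mono_left
        nhdsWithin_le_nhds
    have hval : gAux n 1 = 1 / unitBallVol n := by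
      rw [unitBallVol_eq n hn, gAux]
      have h1 : ((n : ℝ) + 1 + 1) / 2 = (n : ℝ) / 2 + 1 := by ring
      rw [h1, show ((3:ℝ) - 1)/2 = 1 by norm_num, Real.Gamma_one,
        Real.rpow_neg_one]
      have hpi : (0:ℝ) < Real.pi ^ ((n : ℝ) / 2) := Real.rpow_pos_of_pos Real.pi_pos _
      field_simp
    rw [← hval]
    refine hlim.congr' ?_
    filter_upwards [self_mem_nhdsWithin] with s hs
    exact (gAux_eq n hs).symm
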